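/- arXiv:1912.01600 — 2 statements merged into one kernel-verified Lean document; each statement's English description precedes it below -/
import Mathlib

section
/- In any simple graph G with at least one vertex, there exists a vertex v such that the number of triangles of G having at least one vertex in the closed neighborhood N[v] is at most C(d(v)+1, 3), where d(v) is the degree of v. -/
/-!
Count pairs `(v, T)` of a vertex and a triangle meeting `N[v]`. If `v ∈ T`, then `T \ {v}` is a
pair of neighbours of `v`: at most `C(d(v), 2)` such triangles. If `v ∉ T`, pass to the 4-set
`Q = T ∪ {v}`. In a 4-set, one vertex `v` such that `Q \ {v}` is a triangle adjacent to `v` forces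
a vertex of `Q` adjacent to all others, two such `v` force two, and three force `Q` to be a `K₄`;
so they are no more numerous than the vertices `x ∈ Q` adjacent to the rest of `Q`, and pairs
`(x, Q)` of the latter kind are counted by `∑ C(d(x), 3)`. As `C(d, 2) + C(d, 3) = C(d + 1, 3)`,
the average of `|T_{N[v]}| - C(d(v) + 1, 3)` over all vertices is nonpositive.
-/

open Finset

lemma Finset.sum_card_filter_mem_and_eq {α : Type*} [Fintype α] [DecidableEq α]
    (𝒬 : Finset (Finset α)) (r : α → Finset α → Prop) [∀ a Q, Decidable (r a Q)] :
    ∑ a, #{Q ∈ 𝒬 | a ∈ Q ∧ r a Q} = ∑ Q ∈ 𝒬, #{a ∈ Q | r a Q} := by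
  simp only [card_filter, ite_and]
  rw [sum_comm]
  exact sum_congr rfl fun Q _ => sum_ite_mem univ Q _ |>.trans (by rw [univ_inter])

namespace SimpleGraph

section FourSets

variable {V : Type*} [DecidableEq V] (G : SimpleGraph V)

def TouchesTriangleOpposite (Q : Finset V) (v : V) : Prop :=
  G.IsNClique 3 (Q.erase v) ∧ ∃ u ∈ Q, G.Adj v u

def IsUniversalIn (Q : Finset V) (x : V) : Prop :=
  ∀ y ∈ Q, y ≠ x → G.Adj x y

instance [DecidableRel G.Adj] (Q : Finset V) (v : V) :
    Decidable (G.TouchesTriangleOpposite Q v) :=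
  inferInstanceAs (Decidable (_ ∧ _))

instance [DecidableRel G.Adj] (Q : Finset V) (x : V) : Decidable (G.IsUniversalIn Q x) :=
  inferInstanceAs (Decidable (∀ _ ∈ Q, _))

variable {G}

lemma TouchesTriangleOpposite.isUniversalIn {Q : Finset V} {v u : V}
    (hv : G.TouchesTriangleOpposite Q v) (hu : u ∈ Q) (hvu : G.Adj v u) :
    G.IsUniversalIn Q u := by
  intro y hy hyu
  by_cases hyv : y = v
  · exact hyv ▸ hvu.symm
  · exact hv.1.isClique (mem_erase.2 ⟨hvu.ne', hu⟩) (mem_erase.2 ⟨hyv, hy⟩) (Ne.symm hyu)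

lemma isUniversalIn_of_touchesTriangleOpposite_of_ne {Q : Finset V} {v₁ v₂ w : V}
    (h₁ : G.TouchesTriangleOpposite Q v₁) (h₂ : G.TouchesTriangleOpposite Q v₂)
    (hv : v₁ ≠ v₂) (hw : w ∈ Q) (hw₁ : w ≠ v₁) (hw₂ : w ≠ v₂) : G.IsUniversalIn Q w := by
  intro y hy hyw
  by_cases hy₁ : y = v₁
  · have hy₂ : y ≠ v₂ := hy₁ ▸ hv
    exact h₂.1.isClique (mem_erase.2 ⟨hw₂, hw⟩) (mem_erase.2 ⟨hy₂, hy⟩) (Ne.symm hyw)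
  · exact h₁.1.isClique (mem_erase.2 ⟨hw₁, hw⟩) (mem_erase.2 ⟨hy₁, hy⟩) (Ne.symm hyw)

lemma card_touchesTriangleOpposite_le_card_isUniversalIn [DecidableRel G.Adj] {Q : Finset V}
    (hQ : #Q = 4) :
    #{v ∈ Q | G.TouchesTriangleOpposite Q v} ≤ #{x ∈ Q | G.IsUniversalIn Q x} := by
  set B := {v ∈ Q | G.TouchesTriangleOpposite Q v}
  set A := {x ∈ Q | G.IsUniversalIn Q x}
  have universal_of_ne {v₁ v₂ w : V} (h₁ : v₁ ∈ B) (h₂ : v₂ ∈ B) (hv : v₁ ≠ v₂) (hw : w ∈ Q)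
      (hw₁ : w ≠ v₁) (hw₂ : w ≠ v₂) : w ∈ A :=
    mem_filter.2 ⟨hw, isUniversalIn_of_touchesTriangleOpposite_of_ne
      (mem_filter.1 h₁).2 (mem_filter.1 h₂).2 hv hw hw₁ hw₂⟩
  rcases Nat.lt_or_ge 2 #B with hB | hB
  · obtain ⟨a, ha, b, hb, c, hc, hab, hac, hbc⟩ := two_lt_card.1 hB
    have hA : A = Q := by
      refine filter_true_of_mem fun w hw => (mem_filter.1 (show w ∈ A from ?_)).2
      by_cases hwa : w = a
      · exact universal_of_ne hb hc hbc hw (hwa ▸ hab) (hwa ▸ hac)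
      by_cases hwb : w = b
      · exact universal_of_ne ha hc hac hw (hwb ▸ hab.symm) (hwb ▸ hbc)
      · exact universal_of_ne ha hb hab hw hwa hwb
    calc #B ≤ #Q := card_filter_le _ _
      _ = #A := by rw [hA]
  rcases Nat.lt_or_ge 1 #B with hB' | hB'
  · obtain ⟨a, ha, b, hb, hab⟩ := one_lt_card.1 hB'
    have haQ : a ∈ Q := (mem_filter.1 ha).1
    have hbQ : b ∈ (Q.erase a) := mem_erase.2 ⟨hab.symm, (mem_filter.1 hb).1⟩
    calc #B ≤ #((Q.erase a).erase b) := by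
          rw [card_erase_of_mem hbQ, card_erase_of_mem haQ, hQ]; exact hB
      _ ≤ #A := card_le_card fun w hw =>
          universal_of_ne ha hb hab (mem_of_mem_erase (mem_of_mem_erase hw))
            (ne_of_mem_erase (mem_of_mem_erase hw)) (ne_of_mem_erase hw)
  rcases B.eq_empty_or_nonempty with hB₀ | ⟨v, hv⟩
  · simp [hB₀]
  · obtain ⟨-, u, hu, hvu⟩ := (mem_filter.1 hv).2
    have huA : u ∈ A := mem_filter.2 ⟨hu, (mem_filter.1 hv).2.isUniversalIn hu hvu⟩
    exact hB'.trans (card_pos.2 ⟨u, huA⟩)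

end FourSets

section Counting

variable {V : Type*} [Fintype V] [DecidableEq V] (G : SimpleGraph V) [DecidableRel G.Adj]

def closedNbhdTriangles (v : V) : Finset (Finset V) :=
  {t ∈ G.cliqueFinset 3 | ∃ u ∈ t, u = v ∨ G.Adj u v}

lemma card_filter_mem_cliqueFinset_three_le (v : V) :
    #{t ∈ G.cliqueFinset 3 | v ∈ t} ≤ (G.degree v).choose 2 := by
  rw [← card_neighborFinset_eq_degree, ← card_powersetCard]
  refine card_le_card_of_injOn (·.erase v) (fun t ht => ?_)
    fun s hs t ht => erase_injOn' v (mem_filter.1 hs).2 (mem_filter.1 ht).2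
  obtain ⟨ht, hvt⟩ := mem_filter.1 ht
  rw [mem_cliqueFinset_iff] at ht
  refine mem_powersetCard.2 ⟨fun u hu => ?_, by rw [card_erase_of_mem hvt, ht.card_eq]⟩
  exact (mem_neighborFinset _ _ _).2
    (ht.isClique hvt (mem_of_mem_erase hu) (ne_of_mem_erase hu).symm)

lemma card_closedNbhdTriangles_le (v : V) :
    #(G.closedNbhdTriangles v) ≤
      (G.degree v).choose 2 + #{t ∈ G.cliqueFinset 3 | v ∉ t ∧ ∃ u ∈ t, G.Adj u v} := by
  calc #(G.closedNbhdTriangles v)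
      ≤ #({t ∈ G.cliqueFinset 3 | v ∈ t} ∪
          {t ∈ G.cliqueFinset 3 | v ∉ t ∧ ∃ u ∈ t, G.Adj u v}) := by
        refine card_le_card fun t ht => ?_
        simp only [closedNbhdTriangles, mem_union, mem_filter] at ht ⊢
        obtain ⟨ht, u, hu, rfl | huv⟩ := ht
        · exact .inl ⟨ht, hu⟩
        · by_cases hvt : v ∈ t
          exacts [.inl ⟨ht, hvt⟩, .inr ⟨ht, hvt, u, hu, huv⟩]
    _ ≤ _ := (card_union_le _ _).trans
        (Nat.add_le_add_right (G.card_filter_mem_cliqueFinset_three_le v) _)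

lemma card_adjacent_triangles_le (v : V) :
    #{t ∈ G.cliqueFinset 3 | v ∉ t ∧ ∃ u ∈ t, G.Adj u v} ≤
      #{Q ∈ powersetCard 4 univ | v ∈ Q ∧ G.TouchesTriangleOpposite Q v} := by
  refine card_le_card_of_injOn (insert v) (fun t ht => ?_) fun s hs t ht hst => ?_
  · obtain ⟨ht, hvt, u, hu, huv⟩ := mem_filter.1 ht
    rw [mem_cliqueFinset_iff] at ht
    refine mem_filter.2 ⟨mem_powersetCard.2 ⟨subset_univ _, ?_⟩, mem_insert_self v t, ?_, ?_⟩
    · rw [card_insert_of_notMem hvt, ht.card_eq]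
    · rwa [erase_insert hvt]
    · exact ⟨u, mem_insert_of_mem hu, huv.symm⟩
  · rw [← erase_insert (mem_filter.1 hs).2.1, ← erase_insert (mem_filter.1 ht).2.1]
    exact congrArg (·.erase v) hst

lemma card_isUniversalIn_le (x : V) :
    #{Q ∈ powersetCard 4 univ | x ∈ Q ∧ G.IsUniversalIn Q x} ≤ (G.degree x).choose 3 := by
  rw [← card_neighborFinset_eq_degree, ← card_powersetCard]
  refine card_le_card_of_injOn (·.erase x) (fun Q hQ => ?_)
    fun P hP Q hQ => erase_injOn' x (mem_filter.1 hP).2.1 (mem_filter.1 hQ).2.1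
  obtain ⟨hQ4, hxQ, hx⟩ := mem_filter.1 hQ
  refine mem_powersetCard.2 ⟨fun y hy => ?_, ?_⟩
  · exact (mem_neighborFinset _ _ _).2 (hx y (mem_of_mem_erase hy) (ne_of_mem_erase hy))
  · rw [card_erase_of_mem hxQ, (mem_powersetCard.1 hQ4).2]

lemma sum_card_adjacent_triangles_le :
    ∑ v, #{t ∈ G.cliqueFinset 3 | v ∉ t ∧ ∃ u ∈ t, G.Adj u v} ≤
      ∑ x, (G.degree x).choose 3 :=
  calc ∑ v, #{t ∈ G.cliqueFinset 3 | v ∉ t ∧ ∃ u ∈ t, G.Adj u v}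
      ≤ ∑ v, #{Q ∈ powersetCard 4 univ | v ∈ Q ∧ G.TouchesTriangleOpposite Q v} :=
        sum_le_sum fun v _ => G.card_adjacent_triangles_le v
    _ = ∑ Q ∈ powersetCard 4 univ, #{v ∈ Q | G.TouchesTriangleOpposite Q v} :=
        sum_card_filter_mem_and_eq _ _
    _ ≤ ∑ Q ∈ powersetCard 4 univ, #{x ∈ Q | G.IsUniversalIn Q x} :=
        sum_le_sum fun _ hQ =>
          card_touchesTriangleOpposite_le_card_isUniversalIn (mem_powersetCard.1 hQ).2
    _ = ∑ x, #{Q ∈ powersetCard 4 univ | x ∈ Q ∧ G.IsUniversalIn Q x} :=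
        (sum_card_filter_mem_and_eq _ _).symm
    _ ≤ ∑ x, (G.degree x).choose 3 := sum_le_sum fun x _ => G.card_isUniversalIn_le x

lemma sum_card_closedNbhdTriangles_le :
    ∑ v, #(G.closedNbhdTriangles v) ≤ ∑ v, (G.degree v + 1).choose 3 :=
  calc ∑ v, #(G.closedNbhdTriangles v)
      ≤ ∑ v, ((G.degree v).choose 2 + #{t ∈ G.cliqueFinset 3 | v ∉ t ∧ ∃ u ∈ t, G.Adj u v}) :=
        sum_le_sum fun v _ => G.card_closedNbhdTriangles_le v
    _ ≤ ∑ v, (G.degree v).choose 2 + ∑ v, (G.degree v).choose 3 := by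
        rw [sum_add_distrib]
        exact Nat.add_le_add_left G.sum_card_adjacent_triangles_le _
    _ = ∑ v, (G.degree v + 1).choose 3 := by
        rw [← sum_add_distrib]
        exact sum_congr rfl fun v _ => (Nat.choose_succ_succ _ 2).symm

end Counting

end SimpleGraph

/-- **Key Lemma (Lemma 1).** In any graph `G` with at least one vertex, there is a vertex `v`
whose closed neighborhood `N[v]` meets at most `C(d(v)+1, 3)` triangles. -/
theorem exists_vertex_closed_neighborhood_meets_few_triangles
    (V : Type*) [Fintype V] [DecidableEq V] [Nonempty V]
    (G : SimpleGraph V) [DecidableRel G.Adj] :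
    ∃ v : V,
      ((G.cliqueFinset 3).filter (fun t => ∃ u ∈ t, u = v ∨ G.Adj u v)).card
        ≤ (G.degree v + 1).choose 3 := by
  obtain ⟨v, -, hv⟩ := exists_le_of_sum_le univ_nonempty G.sum_card_closedNbhdTriangles_le
  exact ⟨v, hv⟩
end

section
/- For any positive integers n, d ≥ 1, any simple graph on n vertices with maximum degree at most d has at most q·(2^{d+1} − 1) + (2^r − 1) nonempty cliques, where n = q(d+1) + r with 0 ≤ r ≤ d. -/
/-!
Count cliques together with the empty one, and write `c(A)` for the number of cliques inside a
vertex set `A`. Deleting a vertex `v` splits the cliques of `A` into those of `A - v` and the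
`insert v t` with `t` a clique of the neighbourhood of `v` in `A`; by induction this gives
`(|A| + 2) c(A) ≤ 2^(|A|+1) + 2 ∑_{s ⊆ A} |s|` (sums over cliques), with equality for complete
graphs.

Now let `v` lie in the largest number of cliques of `A`, let `N` be its neighbourhood in `A` and
`W = {v} ∪ N`. The cliques inside `W` are twice the cliques of `N`; each other clique meeting `W`
meets `N`, and double counting over `N` with the maximality of `v` shows that they number at
most `|N| c(N) - 2 ∑_{t ⊆ N} |t|`. The inequality above for `N` then bounds the cliques meeting
`W` by `2^(|N|+1) - 1`. Since `|W| ≤ d + 1`, deleting `W` and inducting gives the bound: as a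
function of `n = q (d + 1) + r`, the bound `q (2^(d+1) - 1) + 2^r` on `c` grows by at least
`2^w - 1` when `n` grows by `w ≤ d + 1`.
-/

open Finset

theorem two_pow_add_two_pow_le (c a b : ℕ) :
    2 ^ (c + a) + 2 ^ (c + b) ≤ 2 ^ (c + a + b) + 2 ^ c := by
  have ha : 1 ≤ 2 ^ a := Nat.one_le_two_pow
  have hb : 1 ≤ 2 ^ b := Nat.one_le_two_pow
  have key : 2 ^ a + 2 ^ b ≤ 2 ^ a * 2 ^ b + 1 := by nlinarith
  simpa only [pow_add, mul_add, mul_one, mul_assoc] using Nat.mul_le_mul_left (2 ^ c) key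

theorem succ_mul_two_pow_le (m n : ℕ) : (m + 1) * 2 ^ n ≤ 2 ^ (m + n) := by
  rw [pow_add]
  exact Nat.mul_le_mul_right _ Nat.lt_two_pow_self

def cliqueBound (d n : ℕ) : ℕ := n / (d + 1) * (2 ^ (d + 1) - 1) + 2 ^ (n % (d + 1))

theorem cliqueBound_mul_add {d r : ℕ} (hr : r ≤ d) (q : ℕ) :
    cliqueBound d (q * (d + 1) + r) = q * (2 ^ (d + 1) - 1) + 2 ^ r := by
  obtain ⟨hdiv, hmod⟩ := (Nat.div_mod_unique d.succ_pos).2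
    (⟨by ring, by omega⟩ : r + (d + 1) * q = q * (d + 1) + r ∧ r < d + 1)
  rw [cliqueBound, hdiv, hmod]

theorem cliqueBound_add_le {d w : ℕ} (hw : w ≤ d + 1) (m : ℕ) :
    cliqueBound d m + 2 ^ w ≤ cliqueBound d (m + w) + 1 := by
  have hX : 1 ≤ 2 ^ (d + 1) := Nat.one_le_two_pow
  obtain ⟨q, r, hr, rfl⟩ : ∃ q r, r ≤ d ∧ m = q * (d + 1) + r :=
    ⟨m / (d + 1), m % (d + 1), Nat.lt_succ_iff.1 (m.mod_lt d.succ_pos), (m.div_add_mod' _).symm⟩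
  rw [cliqueBound_mul_add hr]
  rcases Nat.lt_or_ge (r + w) (d + 1) with hlt | hge
  · rw [add_assoc (q * (d + 1)), cliqueBound_mul_add (by omega)]
    have := two_pow_add_two_pow_le 0 r w
    simp only [zero_add, pow_zero] at this
    omega
  · obtain ⟨e, he⟩ := Nat.exists_eq_add_of_le hge
    rw [show q * (d + 1) + r + w = (q + 1) * (d + 1) + e by rw [add_mul]; omega,
      cliqueBound_mul_add (by omega), add_mul, one_mul]
    obtain ⟨β, rfl⟩ : ∃ β, r = e + β := ⟨r - e, by omega⟩
    obtain ⟨ω, rfl⟩ : ∃ ω, w = e + ω := ⟨w - e, by omega⟩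
    have := two_pow_add_two_pow_le e β ω
    rw [show e + β + ω = d + 1 by omega] at this
    omega

namespace SimpleGraph

variable {V : Type*} [DecidableEq V] (G : SimpleGraph V) [DecidableRel G.Adj]

def cliquesIn (A : Finset V) : Finset (Finset V) :=
  A.powerset.filter fun s => G.IsClique (s : Set V)

variable {G} {A : Finset V} {v : V}

@[simp]
theorem mem_cliquesIn {s : Finset V} :
    s ∈ G.cliquesIn A ↔ s ⊆ A ∧ G.IsClique (s : Set V) := by
  simp [cliquesIn]

theorem empty_mem_cliquesIn : ∅ ∈ G.cliquesIn A :=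
  mem_cliquesIn.2 ⟨empty_subset A, by simp⟩

theorem cliquesIn_empty : G.cliquesIn ∅ = {∅} := by
  ext s
  simp only [mem_cliquesIn, subset_empty, mem_singleton, and_iff_left_iff_imp]
  rintro rfl
  simp

theorem card_cliquesIn_le : #(G.cliquesIn A) ≤ 2 ^ #A :=
  (card_filter_le _ _).trans (card_powerset A).le

theorem filter_subset_cliquesIn (B : Finset V) :
    (G.cliquesIn A).filter (· ⊆ B) = G.cliquesIn (A ∩ B) := by
  ext s
  simp only [mem_filter, mem_cliquesIn, subset_inter_iff]
  tauto

theorem filter_notMem_cliquesIn (v : V) :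
    (G.cliquesIn A).filter (v ∉ ·) = G.cliquesIn (A.erase v) := by
  ext s
  simp only [mem_filter, mem_cliquesIn, subset_erase]
  tauto

theorem filter_mem_cliquesIn (hv : v ∈ A) :
    (G.cliquesIn A).filter (v ∈ ·) = (G.cliquesIn (A.filter (G.Adj v))).image (insert v) := by
  ext s
  simp only [mem_filter, mem_cliquesIn, mem_image]
  constructor
  · rintro ⟨⟨hsA, hs⟩, hvs⟩
    refine ⟨s.erase v, ⟨fun u hu => ?_, hs.subset (by simp)⟩, insert_erase hvs⟩
    obtain ⟨huv, hus⟩ := mem_erase.1 hu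
    exact mem_filter.2 ⟨hsA hus, hs hvs hus (Ne.symm huv)⟩
  · rintro ⟨t, ⟨htA, ht⟩, rfl⟩
    refine ⟨⟨insert_subset hv (htA.trans (filter_subset _ _)), ?_⟩, mem_insert_self v t⟩
    rw [coe_insert, isClique_insert]
    exact ⟨ht, fun u hu _ => (mem_filter.1 (htA hu)).2⟩

theorem notMem_of_mem_cliquesIn_filter_adj {t : Finset V}
    (ht : t ∈ G.cliquesIn (A.filter (G.Adj v))) : v ∉ t :=
  fun hvt => G.irrefl (mem_filter.1 ((mem_cliquesIn.1 ht).1 hvt)).2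

theorem injOn_insert_cliquesIn_filter_adj :
    Set.InjOn (insert v) (G.cliquesIn (A.filter (G.Adj v)) : Set (Finset V)) := by
  intro s hs t ht hst
  rw [← erase_insert (notMem_of_mem_cliquesIn_filter_adj hs), hst,
    erase_insert (notMem_of_mem_cliquesIn_filter_adj ht)]

theorem card_filter_mem_cliquesIn (hv : v ∈ A) :
    #((G.cliquesIn A).filter (v ∈ ·)) = #(G.cliquesIn (A.filter (G.Adj v))) := by
  rw [filter_mem_cliquesIn hv, card_image_of_injOn injOn_insert_cliquesIn_filter_adj]

theorem sum_cliquesIn {M : Type*} [AddCommMonoid M] (hv : v ∈ A) (f : Finset V → M) :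
    ∑ s ∈ G.cliquesIn A, f s = ∑ s ∈ G.cliquesIn (A.erase v), f s +
      ∑ t ∈ G.cliquesIn (A.filter (G.Adj v)), f (insert v t) := by
  rw [← sum_filter_not_add_sum_filter _ (v ∈ ·), filter_notMem_cliquesIn,
    filter_mem_cliquesIn hv, sum_image injOn_insert_cliquesIn_filter_adj]

theorem card_cliquesIn_eq (hv : v ∈ A) :
    #(G.cliquesIn A) = #(G.cliquesIn (A.erase v)) + #(G.cliquesIn (A.filter (G.Adj v))) := by
  simpa only [card_eq_sum_ones] using sum_cliquesIn (G := G) hv (fun _ => 1)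

theorem sum_card_cliquesIn_eq (hv : v ∈ A) :
    ∑ s ∈ G.cliquesIn A, #s = ∑ s ∈ G.cliquesIn (A.erase v), #s +
      ∑ t ∈ G.cliquesIn (A.filter (G.Adj v)), #t + #(G.cliquesIn (A.filter (G.Adj v))) := by
  rw [sum_cliquesIn hv card, add_assoc, card_eq_sum_ones (G.cliquesIn _), ← sum_add_distrib]
  congr 1
  exact sum_congr rfl fun t ht => card_insert_of_notMem (notMem_of_mem_cliquesIn_filter_adj ht)

theorem sum_cliquesIn_insert {M : Type*} [AddCommMonoid M] {N : Finset V}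
    (hN : ∀ u ∈ N, G.Adj v u) (f : Finset V → M) :
    ∑ s ∈ G.cliquesIn (insert v N), f s =
      ∑ s ∈ G.cliquesIn N, f s + ∑ t ∈ G.cliquesIn N, f (insert v t) := by
  have hvN : v ∉ N := fun h => G.irrefl (hN v h)
  rw [sum_cliquesIn (mem_insert_self v N), erase_insert hvN, filter_insert, if_neg G.irrefl,
    filter_true_of_mem hN]

theorem add_two_mul_card_cliquesIn_le (A : Finset V) :
    (#A + 2) * #(G.cliquesIn A) ≤ 2 ^ (#A + 1) + 2 * ∑ s ∈ G.cliquesIn A, #s := by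
  induction A using Finset.strongInduction with | H A ih =>
  obtain rfl | ⟨v, hv⟩ := A.eq_empty_or_nonempty
  · simp [cliquesIn_empty]
  set N := A.filter (G.Adj v)
  have hNA : N ⊆ A.erase v := fun u hu =>
    mem_erase.2 ⟨(G.ne_of_adj (mem_filter.1 hu).2).symm, (mem_filter.1 hu).1⟩
  have ih₁ := ih _ (erase_ssubset hv)
  rw [card_cliquesIn_eq hv, sum_card_cliquesIn_eq hv, (card_erase_add_one hv).symm]
  rcases hNA.eq_or_ssubset with hN | hN
  · rw [← hN] at ih₁ ⊢
    rw [pow_succ]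
    linarith
  · -- `|N| ≤ |A| - 2`, so the crude bounds `c(B) ≤ 2^|B|` suffice
    have ih₂ := ih _ (hN.trans (erase_ssubset hv))
    obtain ⟨m, hm⟩ := Nat.exists_eq_add_of_lt (card_lt_card hN)
    rw [hm] at ih₁ ⊢
    have h₁ : #(G.cliquesIn (A.erase v)) ≤ 2 ^ (#N + m + 1) := hm ▸ card_cliquesIn_le
    have h₂ : m * #(G.cliquesIn N) ≤ m * 2 ^ #N := Nat.mul_le_mul_left m card_cliquesIn_le
    have h₃ := succ_mul_two_pow_le (m + 1) #N
    rw [show m + 1 + #N = #N + m + 1 by ring] at h₃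
    rw [pow_succ] at ih₁ ih₂
    rw [show 2 ^ (#N + m + 1 + 1 + 1) = 4 * 2 ^ (#N + m + 1) by ring]
    linarith

theorem subset_insert_filter_adj_of_mem_cliquesIn {s : Finset V} (hs : s ∈ G.cliquesIn A)
    (hvs : v ∈ s) : s ⊆ insert v (A.filter (G.Adj v)) := by
  obtain ⟨hsA, hs⟩ := mem_cliquesIn.1 hs
  intro u hu
  rcases eq_or_ne u v with rfl | huv
  · exact mem_insert_self u _
  · exact mem_insert_of_mem (mem_filter.2 ⟨hsA hu, hs hvs hu huv.symm⟩)

theorem card_filter_not_subset_cliquesIn_add_one_le :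
    #((G.cliquesIn A).filter (¬ · ⊆ insert v (A.filter (G.Adj v)))) + 1 ≤
      #(G.cliquesIn (A \ insert v (A.filter (G.Adj v)))) +
        ∑ s ∈ (G.cliquesIn A).filter (¬ · ⊆ insert v (A.filter (G.Adj v))),
          #(A.filter (G.Adj v) ∩ s) := by
  set N := A.filter (G.Adj v)
  set W := insert v N
  set S := (G.cliquesIn A).filter (¬ · ⊆ W)
  have hsub : S ⊆ (G.cliquesIn (A \ W)).erase ∅ ∪ S.filter (fun s => (N ∩ s).Nonempty) := by
    intro s hs
    obtain ⟨hsC, hsW⟩ := mem_filter.1 hs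
    by_cases hN : (N ∩ s).Nonempty
    · exact mem_union_right _ (mem_filter.2 ⟨hs, hN⟩)
    refine mem_union_left _ (mem_erase.2 ⟨fun h => hsW (h ▸ empty_subset W), ?_⟩)
    obtain ⟨hsA, hs⟩ := mem_cliquesIn.1 hsC
    refine mem_cliquesIn.2 ⟨fun u hu => mem_sdiff.2 ⟨hsA hu, fun huW => ?_⟩, hs⟩
    rcases mem_insert.1 huW with rfl | huN
    · exact hsW (subset_insert_filter_adj_of_mem_cliquesIn hsC hu)
    · exact hN ⟨u, mem_inter.2 ⟨huN, hu⟩⟩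
  have hmeet : #(S.filter (fun s => (N ∩ s).Nonempty)) ≤ ∑ s ∈ S, #(N ∩ s) := calc
    _ ≤ ∑ s ∈ S.filter (fun s => (N ∩ s).Nonempty), #(N ∩ s) := by
      simpa using card_nsmul_le_sum _ (fun s => #(N ∩ s)) 1
        fun s hs => card_pos.2 (mem_filter.1 hs).2
    _ ≤ _ := sum_le_sum_of_subset (filter_subset _ _)
  have hempty := card_erase_add_one (empty_mem_cliquesIn (G := G) (A := A \ W))
  have := (card_le_card hsub).trans (card_union_le _ _)
  omega

theorem card_cliquesIn_add_one_le_of_forall_card_filter_mem_le (hv : v ∈ A)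
    (hmax : ∀ u ∈ A,
      #((G.cliquesIn A).filter (u ∈ ·)) ≤ #((G.cliquesIn A).filter (v ∈ ·))) :
    #(G.cliquesIn A) + 1 ≤
      #(G.cliquesIn (A \ insert v (A.filter (G.Adj v)))) + 2 ^ (#(A.filter (G.Adj v)) + 1) := by
  have hout := card_filter_not_subset_cliquesIn_add_one_le (G := G) (A := A) (v := v)
  have hA := add_two_mul_card_cliquesIn_le (G := G) (A.filter (G.Adj v))
  set N := A.filter (G.Adj v)
  set W := insert v N
  have hN : ∀ u ∈ N, G.Adj v u := fun u hu => (mem_filter.1 hu).2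
  have hfilter : (G.cliquesIn A).filter (· ⊆ W) = G.cliquesIn W := by
    rw [filter_subset_cliquesIn, inter_eq_right.2 (insert_subset hv (filter_subset _ _))]
  have hsplit : #(G.cliquesIn A) = #(G.cliquesIn W) + #((G.cliquesIn A).filter (¬ · ⊆ W)) := by
    rw [← hfilter, card_filter_add_card_filter_not]
  have hsum : ∑ s ∈ G.cliquesIn A, #(N ∩ s) =
      ∑ s ∈ G.cliquesIn W, #(N ∩ s) +
        ∑ s ∈ (G.cliquesIn A).filter (¬ · ⊆ W), #(N ∩ s) := by
    rw [← hfilter, sum_filter_add_sum_filter_not]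
  have hW : #(G.cliquesIn W) = 2 * #(G.cliquesIn N) := by
    simpa only [card_eq_sum_ones, two_mul] using sum_cliquesIn_insert hN (fun _ => 1)
  have hWsum : ∑ s ∈ G.cliquesIn W, #(N ∩ s) = 2 * ∑ t ∈ G.cliquesIn N, #t := by
    rw [sum_cliquesIn_insert hN, two_mul]
    congr 1 <;> refine sum_congr rfl fun t ht => ?_
    · exact congrArg card (inter_eq_right.2 (mem_cliquesIn.1 ht).1)
    · rw [inter_insert_of_notMem fun h => G.irrefl (hN v h),
        inter_eq_right.2 (mem_cliquesIn.1 ht).1]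
  have hdouble : ∑ s ∈ G.cliquesIn A, #(N ∩ s) ≤ #N * #(G.cliquesIn N) := by
    rw [← card_filter_mem_cliquesIn hv]
    exact sum_card_inter_le fun u hu => hmax u (filter_subset _ _ hu)
  rw [pow_succ] at hA ⊢
  linarith

theorem exists_card_cliquesIn_add_one_le (hA : A.Nonempty) : ∃ v ∈ A,
    #(G.cliquesIn A) + 1 ≤
      #(G.cliquesIn (A \ insert v (A.filter (G.Adj v)))) + 2 ^ (#(A.filter (G.Adj v)) + 1) := by
  obtain ⟨v, hv, hmax⟩ := A.exists_max_image (fun u => #((G.cliquesIn A).filter (u ∈ ·))) hA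
  exact ⟨v, hv, card_cliquesIn_add_one_le_of_forall_card_filter_mem_le hv hmax⟩

theorem card_cliquesIn_le_cliqueBound [G.LocallyFinite] {d : ℕ} (hdeg : ∀ v, G.degree v ≤ d)
    (A : Finset V) : #(G.cliquesIn A) ≤ cliqueBound d #A := by
  induction A using Finset.strongInduction with | H A ih =>
  obtain rfl | hA := A.eq_empty_or_nonempty
  · simp [cliquesIn_empty, cliqueBound]
  obtain ⟨v, hv, hstep⟩ := exists_card_cliquesIn_add_one_le (G := G) hA
  set N := A.filter (G.Adj v)
  have hWA : insert v N ⊆ A := insert_subset hv (filter_subset _ _)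
  have hvN : v ∉ N := fun h => G.irrefl (mem_filter.1 h).2
  have hdegN : #N ≤ d := calc
    #N ≤ #(G.neighborFinset v) :=
      card_le_card fun u hu => (G.mem_neighborFinset v u).2 (mem_filter.1 hu).2
    _ = G.degree v := G.card_neighborFinset_eq_degree v
    _ ≤ d := hdeg v
  have hcard : #(A \ insert v N) + (#N + 1) = #A := by
    rw [card_sdiff_of_subset hWA, card_insert_of_notMem hvN, Nat.sub_add_cancel]
    simpa [card_insert_of_notMem hvN] using card_le_card hWA
  have hrest := ih _ (sdiff_ssubset hWA (insert_nonempty v N))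
  have hbound := cliqueBound_add_le (by omega : #N + 1 ≤ d + 1) #(A \ insert v N)
  rw [hcard] at hbound
  omega

end SimpleGraph

theorem max_total_cliques_of_max_degree_general
    (n d q r : ℕ)
    (hqr : n = q * (d + 1) + r) (hr : r ≤ d)
    (V : Type*) [Fintype V] [DecidableEq V] (hcard : Fintype.card V = n)
    (G : SimpleGraph V) [DecidableRel G.Adj]
    (hdeg : ∀ v : V, G.degree v ≤ d) :
    ((Finset.univ : Finset (Finset V)).filter
        (fun s : Finset V => s.Nonempty ∧ G.IsClique (↑s : Set V))).card
      ≤ q * (2 ^ (d + 1) - 1) + (2 ^ r - 1) := by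
  have hnonempty : (Finset.univ : Finset (Finset V)).filter
      (fun s : Finset V => s.Nonempty ∧ G.IsClique (↑s : Set V)) =
        (G.cliquesIn univ).erase ∅ := by
    ext s
    simp [nonempty_iff_ne_empty]
  have hbound := SimpleGraph.card_cliquesIn_le_cliqueBound hdeg univ
  rw [card_univ, hcard, hqr, cliqueBound_mul_add hr] at hbound
  have hempty := card_erase_add_one (SimpleGraph.empty_mem_cliquesIn (G := G) (A := univ))
  rw [hnonempty]
  omega

/-- **Galvin's conjecture, generalized.** Any graph on `n ≥ 1` vertices with maximum degree at
most `d ≥ 1` has at most `q * (2^(d+1) - 1) + (2^r - 1)` nonempty cliques, where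
`n = q*(d+1) + r` with `0 ≤ r ≤ d`. -/
theorem max_total_cliques_of_max_degree
    (n d q r : ℕ) (hn : 1 ≤ n) (hd : 1 ≤ d)
    (hqr : n = q * (d + 1) + r) (hr : r ≤ d)
    (V : Type*) [Fintype V] [DecidableEq V] (hcard : Fintype.card V = n)
    (G : SimpleGraph V) [DecidableRel G.Adj]
    (hdeg : ∀ v : V, G.degree v ≤ d) :
    ((Finset.univ : Finset (Finset V)).filter
        (fun s : Finset V => s.Nonempty ∧ G.IsClique (↑s : Set V))).card
      ≤ q * (2 ^ (d + 1) - 1) + (2 ^ r - 1) :=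
  max_total_cliques_of_max_degree_general n d q r hqr hr V hcard G hdeg
end
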